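/- arXiv:quant-ph/0601150 — 2 statements merged into one kernel-verified Lean document; each statement's English description precedes it below -/
import Mathlib

section
/- Let U be a unitary operator on ℂ^d (d ≥ 2) that is not a scalar multiple of the identity, with θ = Θ(U) ∈ (0, π], and let N = ⌈π/θ⌉. Then there exist a unitary X on ℂ^d and a unit vector ψ ∈ ℂ^d such that ⟨ψ| X† U X U^{N−1} |ψ⟩ = 0. -/
open Complex Matrix

/-- The length of the smallest closed arc of the unit circle containing the spectrum
of a matrix. -/
noncomputable def arcTheta {d : ℕ} (U : Matrix (Fin d) (Fin d) ℂ) : ℝ :=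
  sInf {L : ℝ | 0 ≤ L ∧ ∃ a : ℝ, ∀ z ∈ spectrum ℂ U,
    ∃ t ∈ Set.Icc a (a + L), z = Complex.exp (Complex.I * t)}


lemma dot_conj_comm {d : ℕ} (x y : Fin d → ℂ) : star x ⬝ᵥ y = (starRingEnd ℂ) (star y ⬝ᵥ x) := by
  simp [dotProduct, map_sum, mul_comm]

lemma euclidean_inner_eq {d : ℕ} (x y : EuclideanSpace ℂ (Fin d)) :
    (inner ℂ x y : ℂ) = star (x : Fin d → ℂ) ⬝ᵥ (y : Fin d → ℂ) := by
  simp [PiLp.inner_apply, dotProduct, RCLike.inner_apply, mul_comm]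

lemma exists_unitary_two {d : ℕ} (hd : 2 ≤ d) (p q r s : Fin d → ℂ)
    (hpp : star p ⬝ᵥ p = 1) (hqq : star q ⬝ᵥ q = 1) (hpq : star p ⬝ᵥ q = 0)
    (hrr : star r ⬝ᵥ r = 1) (hss : star s ⬝ᵥ s = 1) (hrs : star r ⬝ᵥ s = 0) :
    ∃ X ∈ Matrix.unitaryGroup (Fin d) ℂ, X *ᵥ p = r ∧ X *ᵥ q = s := by
  classical
  set i0 : Fin d := ⟨0, by omega⟩
  set i1 : Fin d := ⟨1, by omega⟩
  have h01 : i0 ≠ i1 := by simp [i0, i1, Fin.ext_iff]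
  have hcard : Module.finrank ℂ (EuclideanSpace ℂ (Fin d)) = Fintype.card (Fin d) := by
    rw [finrank_euclideanSpace_fin, Fintype.card_fin]
  have key : ∀ (p q : Fin d → ℂ), star p ⬝ᵥ p = 1 → star q ⬝ᵥ q = 1 → star p ⬝ᵥ q = 0 →
      ∃ B : OrthonormalBasis (Fin d) ℂ (EuclideanSpace ℂ (Fin d)), B i0 = p ∧ B i1 = q := by
    intro p q hpp hqq hpq
    have hqp : star q ⬝ᵥ p = 0 := by rw [dot_conj_comm, hpq]; simp
    set v1 : Fin d → (EuclideanSpace ℂ (Fin d)) := fun i => if i = i0 then WithLp.toLp 2 p else if i = i1 then WithLp.toLp 2 q else 0 with hv1def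
    have e00 : v1 i0 = p := by simp [hv1def]
    have e11 : v1 i1 = q := by simp [hv1def, h01.symm]
    have hv1 : Orthonormal ℂ (({i0, i1} : Set (Fin d)).restrict v1) := by
      rw [orthonormal_iff_ite]
      rintro ⟨i, hi⟩ ⟨j, hj⟩
      have hval : ∀ x, x ∈ ({i0,i1} : Set (Fin d)) → ∀ y, y ∈ ({i0,i1} : Set (Fin d)) →
          (inner ℂ (v1 x) (v1 y) : ℂ) = if x = y then 1 else 0 := by
        rintro x (rfl | rfl) y (rfl | rfl)
        · rw [euclidean_inner_eq, e00, if_pos rfl]; exact hpp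
        · rw [euclidean_inner_eq, e00, e11, if_neg h01]; exact hpq
        · rw [euclidean_inner_eq, e00, e11, if_neg h01.symm]; exact hqp
        · rw [euclidean_inner_eq, e11, if_pos rfl]; exact hqq
      have h2 := hval i hi j hj
      change inner ℂ (v1 i) (v1 j) = _; rw [h2]
      by_cases h : i = j
      · subst h; simp
      · rw [if_neg h, if_neg (by simpa [Subtype.ext_iff] using h)]
    obtain ⟨B, hB⟩ := hv1.exists_orthonormalBasis_extension_of_card_eq hcard
    refine ⟨B, ?_, ?_⟩
    · rw [hB i0 (by simp)]; exact e00
    · rw [hB i1 (by simp)]; exact e11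
  obtain ⟨B1, hB1p, hB1q⟩ := key p q hpp hqq hpq
  obtain ⟨B2, hB2r, hB2s⟩ := key r s hrr hss hrs
  set f : EuclideanSpace ℂ (Fin d) ≃ₗᵢ[ℂ] EuclideanSpace ℂ (Fin d) := B1.repr.trans B2.repr.symm with hfdef
  have hf1 : ∀ i, f (B1 i) = B2 i := by
    intro i
    simp [hfdef, B1.repr_self, B2.repr_symm_single]
  set X : Matrix (Fin d) (Fin d) ℂ := Matrix.of (fun i j => (f (EuclideanSpace.single j (1:ℂ))) i) with hXdef
  have hXapp : ∀ x : Fin d → ℂ, X *ᵥ x = f (WithLp.toLp 2 x) := by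
    intro x
    have hx : (WithLp.toLp 2 x : EuclideanSpace ℂ (Fin d)) = ∑ j, x j • EuclideanSpace.single j (1:ℂ) := by
      ext i
      rw [show ((∑ j, x j • EuclideanSpace.single j (1:ℂ)) : EuclideanSpace ℂ (Fin d)) i
          = ∑ j, x j * (EuclideanSpace.single j (1:ℂ) i) by
        rw [WithLp.ofLp_sum, Finset.sum_apply]; simp [PiLp.smul_apply, smul_eq_mul]]
      simp [EuclideanSpace.single_apply]
    funext i
    rw [Matrix.mulVec, dotProduct]
    conv_rhs => rw [hx]
    rw [map_sum]
    rw [show ((∑ j, f (x j • EuclideanSpace.single j (1:ℂ))) : EuclideanSpace ℂ (Fin d)) i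
        = ∑ j, (f (x j • EuclideanSpace.single j (1:ℂ))) i by rw [WithLp.ofLp_sum, Finset.sum_apply]]
    refine Finset.sum_congr rfl fun j _ => ?_
    rw [_root_.map_smul]
    simp only [hXdef, Matrix.of_apply]
    exact mul_comm _ _
  have hsingle : ∀ i j : Fin d, (inner ℂ (EuclideanSpace.single i (1:ℂ)) (EuclideanSpace.single j (1:ℂ)) : ℂ)
      = if i = j then 1 else 0 := by
    intro i j
    rw [euclidean_inner_eq]
    simp [dotProduct, EuclideanSpace.single_apply, Pi.star_apply]
    by_cases h : i = j <;> simp [h, eq_comm]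
  refine ⟨X, ?_, ?_, ?_⟩
  · rw [Matrix.mem_unitaryGroup_iff']
    ext i j
    rw [Matrix.mul_apply, Matrix.one_apply]
    have hsx : ∀ k, (star X) i k * X k j = (starRingEnd ℂ) (X k i) * X k j := fun k => rfl
    simp_rw [hsx]
    have hdot : ∑ k, (starRingEnd ℂ) (X k i) * X k j
        = (inner ℂ (f (EuclideanSpace.single i (1:ℂ))) (f (EuclideanSpace.single j (1:ℂ))) : ℂ) := by
      rw [euclidean_inner_eq]
      simp [dotProduct, hXdef]
    rw [hdot, f.inner_map_map, hsingle]
  · rw [show p = (B1 i0 : Fin d → ℂ) from hB1p.symm ▸ rfl, hXapp, WithLp.toLp_ofLp, hf1, hB2r]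
  · rw [show q = (B1 i1 : Fin d → ℂ) from hB1q.symm ▸ rfl, hXapp, WithLp.toLp_ofLp, hf1, hB2s]

lemma arg_exp_of_Ioc {x : ℝ} (h1 : -Real.pi < x) (h2 : x ≤ Real.pi) :
    Complex.arg (Complex.exp (I * x)) = x := by
  rw [mul_comm, Complex.arg_exp_mul_I, toIocMod_eq_self]
  constructor
  · exact h1
  · simpa using by linarith [Real.pi_pos]

lemma abs_arg_exp_le (x : ℝ) : |Complex.arg (Complex.exp (I * x))| ≤ |x| := by
  by_cases hx : -Real.pi < x ∧ x ≤ Real.pi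
  · rw [arg_exp_of_Ioc hx.1 hx.2]
  · have hpi : Real.pi ≤ |x| := by
      push_neg at hx
      rcases le_or_gt x (-Real.pi) with h | h
      · exact le_abs.2 (Or.inr (by linarith))
      · exact le_abs.2 (Or.inl (hx h).le)
    have := Complex.arg_le_pi (Complex.exp (I * x))
    have := Complex.neg_pi_lt_arg (Complex.exp (I * x))
    exact le_trans (abs_le.2 ⟨by linarith, by linarith⟩) hpi

lemma unitary_dot {d : ℕ} {U : Matrix (Fin d) (Fin d) ℂ} (hU1 : Uᴴ * U = 1)
    (x y : Fin d → ℂ) : star (U *ᵥ x) ⬝ᵥ (U *ᵥ y) = star x ⬝ᵥ y := by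
  rw [Matrix.star_mulVec, Matrix.dotProduct_mulVec, Matrix.vecMul_vecMul, hU1, Matrix.vecMul_one]

lemma exists_unit_eigenvector {d : ℕ} {U : Matrix (Fin d) (Fin d) ℂ} {z : ℂ}
    (hz : z ∈ spectrum ℂ U) : ∃ v : Fin d → ℂ, star v ⬝ᵥ v = 1 ∧ U *ᵥ v = z • v := by
  classical
  have hz' : ¬ IsUnit (z • (1 : Matrix (Fin d) (Fin d) ℂ) - U) := by
    have := spectrum.mem_iff.mp hz
    rwa [Algebra.algebraMap_eq_smul_one] at this
  have hdet : (z • (1 : Matrix (Fin d) (Fin d) ℂ) - U).det = 0 := by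
    by_contra h
    exact hz' ((Matrix.isUnit_iff_isUnit_det _).2 (isUnit_iff_ne_zero.2 h))
  obtain ⟨v, hv0, hv⟩ := (Matrix.exists_mulVec_eq_zero_iff).2 hdet
  have heig : U *ᵥ v = z • v := by
    have h1 : (z • (1 : Matrix (Fin d) (Fin d) ℂ) - U) *ᵥ v
        = z • v - U *ᵥ v := by
      rw [Matrix.sub_mulVec, Matrix.smul_mulVec, Matrix.one_mulVec]
    rw [h1] at hv
    linear_combination (norm := module) -hv
  set r : ℝ := ∑ i, Complex.normSq (v i) with hrdef
  have hr : star v ⬝ᵥ v = (r : ℂ) := by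
    simp only [dotProduct, Pi.star_apply, hrdef]
    push_cast
    refine Finset.sum_congr rfl fun i _ => ?_
    rw [Complex.normSq_eq_conj_mul_self]
    rfl
  have hrpos : 0 < r := by
    have : ∃ i, v i ≠ 0 := by
      by_contra h
      push_neg at h
      exact hv0 (funext fun i => h i)
    obtain ⟨i, hi⟩ := this
    exact Finset.sum_pos' (fun j _ => Complex.normSq_nonneg _)
      ⟨i, Finset.mem_univ i, Complex.normSq_pos.2 hi⟩
  set c : ℂ := (((Real.sqrt r)⁻¹ : ℝ) : ℂ)
  refine ⟨c • v, ?_, ?_⟩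
  · rw [star_smul, smul_dotProduct, dotProduct_smul, hr]
    have : star c = c := by
      simp [c, Complex.conj_ofReal]
    rw [this]
    simp only [smul_eq_mul, c]
    push_cast
    norm_cast
    have hs : Real.sqrt r * Real.sqrt r = r := Real.mul_self_sqrt hrpos.le
    have hsne : Real.sqrt r ≠ 0 := by positivity
    field_simp; rw [Real.sq_sqrt hrpos.le]
  · rw [Matrix.mulVec_smul, heig, smul_comm]

lemma spectrum_nonempty_of_two_le {d : ℕ} (hd : 2 ≤ d) (U : Matrix (Fin d) (Fin d) ℂ) :
    (spectrum ℂ U).Nonempty := by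
  haveI : Nonempty (Fin d) := ⟨⟨0, by omega⟩⟩
  have hspec := AlgEquiv.spectrum_eq (Matrix.toLinAlgEquiv (Pi.basisFun ℂ (Fin d))) U
  obtain ⟨c, hc⟩ := Module.End.exists_eigenvalue ((Matrix.toLinAlgEquiv (Pi.basisFun ℂ (Fin d))) U)
  exact ⟨c, hspec ▸ Module.End.hasEigenvalue_iff_mem_spectrum.1 hc⟩

lemma exists_pair_theta {d : ℕ} (hd : 2 ≤ d) (U : Matrix (Fin d) (Fin d) ℂ)
    (hU1 : Uᴴ * U = 1)
    (hθ : arcTheta U ∈ Set.Ioc 0 Real.pi) :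
    ∃ lam : ℂ, lam ∈ spectrum ℂ U ∧ lam * Complex.exp (I * arcTheta U) ∈ spectrum ℂ U := by
  classical
  obtain ⟨hθpos, hθpi⟩ := hθ
  have habs : ∀ z ∈ spectrum ℂ U, ‖z‖ = 1 := by
    intro z hz
    obtain ⟨v, hv1, hveig⟩ := exists_unit_eigenvector hz
    have h := unitary_dot hU1 v v
    rw [hveig, star_smul, smul_dotProduct, dotProduct_smul, hv1] at h
    have h2 : (starRingEnd ℂ) z * z = 1 := by
      simpa [smul_eq_mul] using h
    have h3 : Complex.normSq z = 1 := by
      have h4 : ((Complex.normSq z : ℂ)) = 1 := by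
        rw [Complex.normSq_eq_conj_mul_self]; exact h2
      exact_mod_cast h4
    rw [Complex.norm_def, h3, Real.sqrt_one]
  have hexp_of_abs : ∀ w : ℂ, ‖w‖ = 1 → w = Complex.exp (I * Complex.arg w) := by
    intro w hw
    have h := Complex.norm_mul_exp_arg_mul_I w
    rw [hw, Complex.ofReal_one, one_mul, mul_comm] at h
    exact h.symm
  set A := {L : ℝ | 0 ≤ L ∧ ∃ a : ℝ, ∀ z ∈ spectrum ℂ U,
    ∃ t ∈ Set.Icc a (a + L), z = Complex.exp (Complex.I * t)} with hAdef
  set θ := arcTheta U with hθdef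
  have hArc : θ = sInf A := rfl
  have hbdd : BddBelow A := ⟨0, fun L hL => hL.1⟩
  have hAne : A.Nonempty := by
    refine ⟨2 * Real.pi, ⟨by positivity, ⟨-Real.pi, fun z hz => ?_⟩⟩⟩
    exact ⟨Complex.arg z, ⟨(Complex.neg_pi_lt_arg z).le,
      by linarith [Complex.arg_le_pi z]⟩, hexp_of_abs z (habs z hz)⟩
  have hθle : ∀ L ∈ A, θ ≤ L := fun L hL => by rw [hArc]; exact csInf_le hbdd hL
  have hθlt : ∀ ε : ℝ, 0 < ε → ∃ L ∈ A, L < θ + ε := fun ε hε =>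
    exists_lt_of_csInf_lt hAne (show sInf A < θ + ε by rw [← hArc]; linarith)
  set Sf : Finset ℂ := (Matrix.finite_spectrum U).toFinset with hSfdef
  have hSfmem : ∀ z : ℂ, z ∈ Sf ↔ z ∈ spectrum ℂ U := fun z => Set.Finite.mem_toFinset _
  have hSne : Sf.Nonempty := by
    obtain ⟨z, hz⟩ := spectrum_nonempty_of_two_le hd U
    exact ⟨z, (hSfmem z).2 hz⟩
  set G : Finset ℝ := (Sf ×ˢ Sf).image (fun pr => |Complex.arg (pr.2 / pr.1)|) with hGdef
  have hGne : G.Nonempty := by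
    obtain ⟨z, hz⟩ := hSne
    exact ⟨_, Finset.mem_image.2 ⟨(z, z), Finset.mem_product.2 ⟨hz, hz⟩, rfl⟩⟩
  set δ := G.max' hGne with hδdef
  -- Claim A : δ ≤ θ
  have hAclaim : δ ≤ θ := by
    apply Finset.max'_le
    intro g hg
    obtain ⟨pr, hpr, rfl⟩ := Finset.mem_image.1 hg
    obtain ⟨h1, h2⟩ := Finset.mem_product.1 hpr
    refine le_of_forall_pos_le_add ?_
    intro ε hε
    obtain ⟨L, hLA, hLlt⟩ := hθlt ε hε
    obtain ⟨aa, ha⟩ := hLA.2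
    obtain ⟨t1, ht1, hz1⟩ := ha pr.1 ((hSfmem _).1 h1)
    obtain ⟨t2, ht2, hz2⟩ := ha pr.2 ((hSfmem _).1 h2)
    have hdiv : pr.2 / pr.1 = Complex.exp (I * (t2 - t1)) := by
      rw [hz1, hz2, ← Complex.exp_sub]
      congr 1
      push_cast
      ring
    rw [hdiv]
    have hstep1 := abs_arg_exp_le (t2 - t1)
    rw [Complex.ofReal_sub] at hstep1
    have hstep2 : |t2 - t1| ≤ L := by
      obtain ⟨hl1, hr1⟩ := ht1
      obtain ⟨hl2, hr2⟩ := ht2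
      rw [abs_sub_le_iff]
      constructor <;> linarith
    linarith
  -- Claim B : θ ≤ δ
  have hBclaim : θ ≤ δ := by
    refine le_of_forall_pos_le_add ?_
    intro ε' hε'
    set ε := min ε' (Real.pi / 2) with hεdef
    have hεpos : 0 < ε := lt_min hε' (by positivity)
    have hεε' : ε ≤ ε' := min_le_left _ _
    have hεpi : ε ≤ Real.pi / 2 := min_le_right _ _
    obtain ⟨L, hLA, hLlt⟩ := hθlt ε hεpos
    obtain ⟨aa, ha⟩ := hLA.2
    set tf : ℂ → ℝ := fun z => if hz : z ∈ spectrum ℂ U then Classical.choose (ha z hz) else 0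
      with htfdef
    have htf : ∀ z (hz : z ∈ spectrum ℂ U),
        tf z ∈ Set.Icc aa (aa + L) ∧ z = Complex.exp (I * tf z) := by
      intro z hz
      have hspec := Classical.choose_spec (ha z hz)
      rw [htfdef]
      simp only [dif_pos hz]
      exact ⟨hspec.1, hspec.2⟩
    obtain ⟨zmin, hzminS, hmin⟩ := Finset.exists_min_image Sf tf hSne
    obtain ⟨zmax, hzmaxS, hmax⟩ := Finset.exists_max_image Sf tf hSne
    set δ2 := tf zmax - tf zmin with hδ2def
    have hδ2nonneg : 0 ≤ δ2 := by
      have := hmin zmax hzmaxS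
      rw [hδ2def]; linarith
    have hδ2A : δ2 ∈ A := by
      refine ⟨hδ2nonneg, ⟨tf zmin, fun z hz => ?_⟩⟩
      refine ⟨tf z, ⟨hmin z ((hSfmem z).2 hz), by
        have := hmax z ((hSfmem z).2 hz)
        rw [hδ2def]; linarith⟩, (htf z hz).2⟩
    have hθδ2 : θ ≤ δ2 := hθle _ hδ2A
    have hδ2top : δ2 < θ + ε := by
      have h1 := (htf zmax ((hSfmem _).1 hzmaxS)).1
      have h2 := (htf zmin ((hSfmem _).1 hzminS)).1
      obtain ⟨ha1, ha2⟩ := h1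
      obtain ⟨hb1, hb2⟩ := h2
      rw [hδ2def]
      linarith
    have hdiv : zmax / zmin = Complex.exp (I * δ2) := by
      rw [(htf zmax ((hSfmem _).1 hzmaxS)).2, (htf zmin ((hSfmem _).1 hzminS)).2,
        ← Complex.exp_sub]
      congr 1
      rw [hδ2def]
      push_cast
      ring
    have hpairG : |Complex.arg (zmax / zmin)| ∈ G := by
      exact Finset.mem_image.2 ⟨(zmin, zmax), Finset.mem_product.2 ⟨hzminS, hzmaxS⟩, rfl⟩
    have hGδ : |Complex.arg (zmax / zmin)| ≤ δ := Finset.le_max' G _ hpairG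
    rcases le_or_gt δ2 Real.pi with hc | hc
    · have harg : Complex.arg (Complex.exp (I * δ2)) = δ2 :=
        arg_exp_of_Ioc (by linarith [Real.pi_pos]) hc
      rw [hdiv, harg] at hGδ
      rw [_root_.abs_of_nonneg hδ2nonneg] at hGδ
      linarith
    · set ρ : ℝ := δ2 - 2*Real.pi with hρdef
      have hexpeq : Complex.exp (I * δ2) = Complex.exp (I * (ρ:ℝ)) := by
        have hcast : ((ρ:ℝ):ℂ) = (δ2:ℂ) - 2*(Real.pi:ℂ) := by rw [hρdef]; push_cast; ring
        rw [hcast, mul_sub, Complex.exp_sub,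
          show I * (2*(Real.pi:ℂ)) = 2*Real.pi*I by ring,
          Complex.exp_two_pi_mul_I, div_one]
      have harg : Complex.arg (Complex.exp (I * (ρ:ℝ))) = ρ := by
        apply arg_exp_of_Ioc
        · rw [hρdef]; linarith
        · rw [hρdef]; linarith [Real.pi_pos]
      rw [hdiv, hexpeq, harg] at hGδ
      have h5 : 2 * Real.pi - δ2 ≤ δ := by
        rw [_root_.abs_of_nonpos (by rw [hρdef]; linarith [Real.pi_pos])] at hGδ
        rw [hρdef] at hGδ
        linarith
      linarith
  have hδθ : δ = θ := le_antisymm hAclaim hBclaim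
  obtain ⟨pr, hprmem, hpreq⟩ := Finset.mem_image.1 (G.max'_mem hGne)
  obtain ⟨h1, h2⟩ := Finset.mem_product.1 hprmem
  set lam := pr.1
  set mu := pr.2
  have hlamS : lam ∈ spectrum ℂ U := (hSfmem _).1 h1
  have hmuS : mu ∈ spectrum ℂ U := (hSfmem _).1 h2
  have hlam0 : lam ≠ 0 := by
    intro h
    have := habs lam hlamS
    rw [h] at this
    simp at this
  have hmu0 : mu ≠ 0 := by
    intro h
    have := habs mu hmuS
    rw [h] at this
    simp at this
  have hwabs : ‖mu / lam‖ = 1 := by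
    rw [norm_div, habs lam hlamS, habs mu hmuS, div_one]
  have hargabs : |Complex.arg (mu / lam)| = θ := by rw [hpreq, hδdef] at *; exact hδθ
  rcases (abs_eq hθpos.le).1 hargabs with harg | harg
  · refine ⟨lam, hlamS, ?_⟩
    have hw := hexp_of_abs _ hwabs
    rw [harg] at hw
    have : lam * Complex.exp (I * θ) = mu := by
      rw [← hw]
      field_simp
    rw [this]
    exact hmuS
  · refine ⟨mu, hmuS, ?_⟩
    have hinvabs : ‖lam / mu‖ = 1 := by
      rw [norm_div, habs lam hlamS, habs mu hmuS, div_one]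
    have harginv : Complex.arg (lam / mu) = θ := by
      have h3 : (mu / lam)⁻¹ = lam / mu := by
        field_simp
      have h4 := Complex.arg_inv (mu / lam)
      rw [h3, harg] at h4
      rw [h4, if_neg (by intro hcon; linarith [Real.pi_pos])]
      ring
    have hw := hexp_of_abs _ hinvabs
    rw [harginv] at hw
    have : mu * Complex.exp (I * θ) = lam := by
      rw [← hw]
      field_simp
    rw [this]
    exact hlamS

set_option maxHeartbeats 4000000 in
theorem qudit_sequential_discrimination {d : ℕ} (hd : 2 ≤ d)
    (U : Matrix (Fin d) (Fin d) ℂ) (hU : U ∈ Matrix.unitaryGroup (Fin d) ℂ)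
    (hscalar : ∀ c : ℂ, U ≠ c • (1 : Matrix (Fin d) (Fin d) ℂ))
    (hθ : arcTheta U ∈ Set.Ioc 0 Real.pi)
    (N : ℕ) (hN : N = ⌈Real.pi / arcTheta U⌉₊) :
    ∃ X : Matrix (Fin d) (Fin d) ℂ, X ∈ Matrix.unitaryGroup (Fin d) ℂ ∧
      ∃ ψ : Fin d → ℂ, star ψ ⬝ᵥ ψ = 1 ∧
        star ψ ⬝ᵥ ((Xᴴ * U * X * U ^ (N - 1)) *ᵥ ψ) = 0 := by
  set θ := arcTheta U with hθdef
  obtain ⟨hθpos, hθpi⟩ := hθ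
  have hU1 : Uᴴ * U = 1 := by
    have h := Matrix.mem_unitaryGroup_iff'.mp hU
    rwa [Matrix.star_eq_conjTranspose] at h
  obtain ⟨lam, hlamS, hmuS⟩ := exists_pair_theta hd U hU1 ⟨hθpos, hθpi⟩
  set ω : ℂ := Complex.exp (I * θ) with hωdef
  set mu : ℂ := lam * ω with hmudef
  obtain ⟨u, huu, huEig⟩ := exists_unit_eigenvector hlamS
  obtain ⟨v, hvv, hvEig⟩ := exists_unit_eigenvector hmuS
  have hmod : ∀ (z : ℂ) (w : Fin d → ℂ), star w ⬝ᵥ w = 1 → U *ᵥ w = z • w →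
      (starRingEnd ℂ) z * z = 1 := by
    intro z w hw hweig
    have h := unitary_dot hU1 w w
    rw [hweig, star_smul, smul_dotProduct, dotProduct_smul, hw] at h
    simpa [smul_eq_mul] using h
  have hlam1 : (starRingEnd ℂ) lam * lam = 1 := hmod lam u huu huEig
  have hmu1 : (starRingEnd ℂ) mu * mu = 1 := hmod mu v hvv hvEig
  have hconjω : (starRingEnd ℂ) ω = Complex.exp (-(I * (θ:ℝ))) := by
    rw [hωdef, ← Complex.exp_conj]
    congr 1
    simp
  have hωprod : (starRingEnd ℂ) ω * ω = 1 := by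
    rw [hconjω, hωdef, ← Complex.exp_add, neg_add_cancel, Complex.exp_zero]
  have hωne : ω ≠ 1 := by
    intro h
    rw [hωdef] at h
    obtain ⟨n, hn⟩ := Complex.exp_eq_one_iff.1 h
    have h2 : ((θ : ℝ) : ℂ) = (n : ℂ) * (2 * Real.pi) := by
      have h3 : I * (θ:ℝ) = I * ((n:ℂ) * (2 * Real.pi)) := by rw [hn]; push_cast; ring
      exact mul_left_cancel₀ Complex.I_ne_zero h3
    have h4 : θ = (n : ℝ) * (2 * Real.pi) := by exact_mod_cast h2
    rcases le_or_gt (n:ℝ) 0 with hn0 | hn0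
    · nlinarith [Real.pi_pos]
    · have hn1 : (1:ℤ) ≤ n := by exact_mod_cast (by exact_mod_cast hn0 : (0:ℤ) < n)
      have hn1' : (1:ℝ) ≤ (n:ℝ) := by exact_mod_cast hn1
      nlinarith [Real.pi_pos]
  have huv : star u ⬝ᵥ v = 0 := by
    have h := unitary_dot hU1 u v
    rw [huEig, hvEig, star_smul, smul_dotProduct, dotProduct_smul] at h
    have h2 : ((starRingEnd ℂ) lam * mu) * (star u ⬝ᵥ v) = star u ⬝ᵥ v := by
      simpa [smul_eq_mul, mul_assoc] using h
    have h3 : (starRingEnd ℂ) lam * mu = ω := by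
      rw [hmudef, show (starRingEnd ℂ) lam * (lam * ω) = ((starRingEnd ℂ) lam * lam) * ω by ring,
        hlam1, one_mul]
    rw [h3] at h2
    by_contra hne
    exact hωne (mul_right_cancel₀ hne (h2.trans (one_mul _).symm))
  have hvu : star v ⬝ᵥ u = 0 := by
    rw [dot_conj_comm, huv, map_zero]
  have hcombo : ∀ x1 x2 y1 y2 : ℂ, star (x1 • u + x2 • v) ⬝ᵥ (y1 • u + y2 • v)
      = (starRingEnd ℂ) x1 * y1 + (starRingEnd ℂ) x2 * y2 := by
    intro x1 x2 y1 y2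
    simp only [star_add, star_smul, add_dotProduct, smul_dotProduct,
      dotProduct_add, dotProduct_smul, huu, hvv, huv, hvu, smul_eq_mul,
      RCLike.star_def]
    ring
  have hUpow : ∀ (k : ℕ) (z : ℂ) (w : Fin d → ℂ), U *ᵥ w = z • w → U ^ k *ᵥ w = z ^ k • w := by
    intro k
    induction k with
    | zero => intro z w h; simp [Matrix.one_mulVec]
    | succ k ih =>
      intro z w h
      rw [pow_succ, ← Matrix.mulVec_mulVec, h, Matrix.mulVec_smul, ih z w h, smul_smul,
        show z * z ^ k = z ^ (k+1) by ring]
  have hNceil : (Real.pi / θ : ℝ) ≤ (N : ℝ) := by rw [hN]; exact Nat.le_ceil _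
  have hNθ : Real.pi ≤ (N : ℝ) * θ := by
    rw [div_le_iff₀ hθpos] at hNceil; linarith
  have hN1 : 1 ≤ N := by
    rw [hN]
    exact Nat.one_le_ceil_iff.2 (by positivity)
  set rt2 : ℂ := (((Real.sqrt 2)⁻¹ : ℝ) : ℂ) with hrt2def
  have hrt2sq : rt2 * rt2 = (1/2 : ℂ) := by
    rw [hrt2def]
    have h2 : Real.sqrt 2 * Real.sqrt 2 = 2 := Real.mul_self_sqrt (by norm_num)
    have h2' : (Real.sqrt 2)⁻¹ * (Real.sqrt 2)⁻¹ = 1/2 := by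
      field_simp; rw [Real.sq_sqrt (by norm_num)]
    rw [← Complex.ofReal_mul, h2']
    norm_num
  set ψ : Fin d → ℂ := rt2 • u + rt2 • v with hψdef
  have hψψ : star ψ ⬝ᵥ ψ = 1 := by
    rw [hψdef, hcombo, Complex.conj_ofReal]
    rw [show rt2 * rt2 + rt2 * rt2 = 2 * (rt2 * rt2) by ring, hrt2sq]
    norm_num
  by_cases hNone : N = 1
  · -- N = 1 : θ = π, μ = -λ
    have hθeq : θ = Real.pi := by
      have hle : (⌈Real.pi/θ⌉₊ : ℕ) ≤ 1 := by rw [← hN, hNone]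
      have h2 : Real.pi/θ ≤ ((1:ℕ):ℝ) := Nat.ceil_le.1 hle
      rw [Nat.cast_one, div_le_one hθpos] at h2
      linarith
    have hωneg : ω = -1 := by
      rw [hωdef, hθeq, mul_comm]
      exact Complex.exp_pi_mul_I
    refine ⟨1, one_mem _, ψ, hψψ, ?_⟩
    have hmat : (1:Matrix (Fin d) (Fin d) ℂ)ᴴ * U * 1 * U ^ (N-1) = U := by
      rw [hNone]
      simp
    rw [hmat]
    have hUψ : U *ᵥ ψ = (rt2*lam) • u + (rt2*mu) • v := by
      rw [hψdef, Matrix.mulVec_add, Matrix.mulVec_smul, Matrix.mulVec_smul, huEig, hvEig,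
        smul_smul, smul_smul]
    rw [hψdef, hUψ, hcombo, Complex.conj_ofReal, hmudef, hωneg]
    ring
  · -- N ≥ 2
    have hN2 : 2 ≤ N := by omega
    set n1 : ℕ := N - 1 with hn1def
    have hn1cast : ((n1:ℕ):ℝ) = (N:ℝ) - 1 := by
      rw [hn1def, Nat.cast_sub hN1, Nat.cast_one]
    set η : ℝ := (n1 : ℝ) * θ with hηdef
    have hn1pos : (1:ℝ) ≤ (n1:ℝ) := by
      have : 1 ≤ n1 := by omega
      exact_mod_cast this
    have hη0 : 0 < η := by
      rw [hηdef]; nlinarith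
    have hNlt : (N:ℝ) < Real.pi/θ + 1 := by
      rw [hN]; exact Nat.ceil_lt_add_one (by positivity)
    have hηπ : η < Real.pi := by
      rw [hηdef, hn1cast]
      have h2 : ((N:ℝ) - 1) * θ < (Real.pi/θ) * θ :=
        mul_lt_mul_of_pos_right (by linarith) hθpos
      rwa [div_mul_cancel₀ _ (ne_of_gt hθpos)] at h2
    have hθNθ : Real.pi ≤ θ + η := by
      rw [hηdef, hn1cast]; nlinarith
    set kc : ℝ := Real.cos (η/2) with hkcdef
    set T : ℝ := Real.sin (η/2) with hTdef
    have hkc0 : 0 < kc := Real.cos_pos_of_mem_Ioo ⟨by linarith [Real.pi_pos], by linarith⟩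
    have hT0 : 0 < T := Real.sin_pos_of_pos_of_lt_pi (by linarith) (by linarith [Real.pi_pos])
    have hTkc : T^2 + kc^2 = 1 := Real.sin_sq_add_cos_sq _
    set st : ℝ := Real.sin (θ/2) with hstdef
    have hst0 : 0 < st := Real.sin_pos_of_pos_of_lt_pi (by linarith) (by linarith [Real.pi_pos])
    have hkey : kc ≤ st := by
      rw [hkcdef, hstdef, ← Real.cos_pi_div_two_sub (θ/2)]
      exact Real.cos_le_cos_of_nonneg_of_le_pi (by linarith) (by linarith [Real.pi_pos])
        (by linarith)
    set hR : ℝ := kc / (2*st) with hhdef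
    have hh0 : 0 < hR := by rw [hhdef]; positivity
    have h2h : 2*hR ≤ 1 := by
      rw [hhdef]
      rw [show 2*(kc/(2*st)) = kc/st by field_simp]
      rw [div_le_one hst0]
      exact hkey
    set sR : ℝ := Real.arcsin (2*hR) / 2 with hsdef
    have hs0 : 0 < sR := by
      rw [hsdef]
      have h9 := Real.arcsin_pos.mpr (show (0:ℝ) < 2*hR by linarith)
      linarith
    have hs2 : sR ≤ Real.pi/4 := by
      rw [hsdef]
      have h9 := Real.arcsin_le_pi_div_two (2*hR)
      linarith
    set p : ℝ := Real.cos sR with hpdef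
    set q : ℝ := Real.sin sR with hqdef
    have hp0 : 0 < p := Real.cos_pos_of_mem_Ioo ⟨by linarith [Real.pi_pos], by linarith [Real.pi_pos]⟩
    have hq0 : 0 < q := Real.sin_pos_of_pos_of_lt_pi hs0 (by linarith [Real.pi_pos])
    have hpq1R : p^2 + q^2 = 1 := by
      rw [hpdef, hqdef, add_comm]
      exact Real.sin_sq_add_cos_sq sR
    have hpqR : 2*p*q*st = kc := by
      have h1 : Real.sin (2*sR) = 2*hR := by
        rw [hsdef, show 2*(Real.arcsin (2*hR)/2) = Real.arcsin (2*hR) by ring]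
        exact Real.sin_arcsin (by linarith) (by linarith)
      have h2 : Real.sin (2*sR) = 2 * q * p := by
        rw [Real.sin_two_mul, hqdef, hpdef]
      have h3 : 2*(p*q) = 2*hR := by rw [show 2*(p*q) = 2*q*p by ring, ← h2, h1]
      rw [show 2*p*q*st = (2*(p*q))*st by ring, h3, hhdef]
      field_simp
    have hcosθ : Real.cos θ = 1 - 2*st^2 := by
      have hh := Real.sin_sq_eq_half_sub (θ/2)
      rw [show 2*(θ/2) = θ by ring] at hh
      rw [hstdef]; linarith
    have hcosη : Real.cos η = 2*kc^2 - 1 := by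
      have hh := Real.cos_two_mul (η/2)
      rw [show 2*(η/2) = η by ring] at hh
      rw [hkcdef]; linarith
    -- complex side
    set pC : ℂ := ((p:ℝ):ℂ) with hpCdef
    set qC : ℂ := ((q:ℝ):ℂ) with hqCdef
    set kcC : ℂ := ((kc:ℝ):ℂ) with hkcCdef
    set stC : ℂ := ((st:ℝ):ℂ) with hstCdef
    set TC : ℂ := ((T:ℝ):ℂ) with hTCdef
    have hTCne : TC ≠ 0 := by
      rw [hTCdef]
      exact_mod_cast ne_of_gt hT0
    have hkcC0 : kcC ≠ 0 := by
      rw [hkcCdef]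
      exact_mod_cast ne_of_gt hkc0
    have hpq1C : pC^2 + qC^2 = 1 := by
      rw [hpCdef, hqCdef]
      exact_mod_cast hpq1R
    have hpq2C : 2*pC*qC*stC = kcC := by
      rw [hpCdef, hqCdef, hstCdef, hkcCdef]
      exact_mod_cast hpqR
    have hTCsq : TC*TC = 1 - kcC^2 := by
      rw [hTCdef, hkcCdef]
      have h9 : T*T = 1 - kc^2 := by nlinarith [hTkc]
      exact_mod_cast h9
    have hexp2cos : ∀ x : ℝ, Complex.exp (I*(x:ℝ)) + Complex.exp (-(I*(x:ℝ))) = 2 * (Real.cos x : ℂ) := by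
      intro x
      rw [Complex.ofReal_cos, Complex.cos]
      ring_nf
    have hωsum : ω + (starRingEnd ℂ) ω = 2 - 4*stC^2 := by
      rw [hconjω, hωdef, hexp2cos θ, hcosθ]
      rw [hstCdef]
      push_cast
      ring
    have hΩsum : ω^n1 + ((starRingEnd ℂ) ω)^n1 = 4*kcC^2 - 2 := by
      have hωpow : ω ^ n1 = Complex.exp (I * (η:ℝ)) := by
        rw [hωdef, ← Complex.exp_nat_mul]
        congr 1
        rw [hηdef]; push_cast; ring
      have hconjpow : ((starRingEnd ℂ) ω) ^ n1 = Complex.exp (-(I * (η:ℝ))) := by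
        rw [hconjω, ← Complex.exp_nat_mul]
        congr 1
        rw [hηdef]; push_cast; ring
      rw [hωpow, hconjpow, hexp2cos η, hcosη]
      rw [hkcCdef]
      push_cast
      ring
    have hlampow : ((starRingEnd ℂ) lam)^n1 * lam^n1 = 1 := by
      rw [← mul_pow, hlam1, one_pow]
    have hΩprod : ((starRingEnd ℂ) ω)^n1 * ω^n1 = 1 := by
      rw [← mul_pow, hωprod, one_pow]
    set c : ℂ := (lam ^ n1 + mu ^ n1)/2 with hcdef
    have hcc : (starRingEnd ℂ) c * c = kcC^2 := by
      have hcform : c = (lam^n1 + lam^n1 * ω^n1)/2 := by rw [hcdef, hmudef, mul_pow]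
      have hconjc : (starRingEnd ℂ) c
          = (((starRingEnd ℂ) lam)^n1 + ((starRingEnd ℂ) lam)^n1 * ((starRingEnd ℂ) ω)^n1)/2 := by
        rw [hcform]
        simp only [map_div₀, map_add, _root_.map_mul, map_pow, map_ofNat]
      rw [hconjc, hcform]
      linear_combination (((1:ℂ) + ((starRingEnd ℂ) ω)^n1) * (1 + ω^n1)/4) * hlampow
        + (1/4 : ℂ) * hΩprod + (1/4 : ℂ) * hΩsum
    have hconjpC : (starRingEnd ℂ) pC = pC := by rw [hpCdef]; exact Complex.conj_ofReal _
    have hconjqC : (starRingEnd ℂ) qC = qC := by rw [hqCdef]; exact Complex.conj_ofReal _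
    set μb : ℂ := lam * (pC^2 + qC^2*ω) with hμbdef
    set ν : ℂ := pC*qC*lam*(1 - ω) with hνdef
    have hμbμb : (starRingEnd ℂ) μb * μb = 1 - kcC^2 := by
      have hconjμb : (starRingEnd ℂ) μb
          = (starRingEnd ℂ) lam * (pC^2 + qC^2 * (starRingEnd ℂ) ω) := by
        rw [hμbdef]
        simp only [_root_.map_mul, map_add, map_pow, hconjpC, hconjqC]
      rw [hconjμb, hμbdef]
      linear_combination ((pC^2+qC^2*((starRingEnd ℂ) ω))*(pC^2+qC^2*ω)) * hlam1 + qC^4 * hωprod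
        + pC^2*qC^2 * hωsum + (pC^2+qC^2+1) * hpq1C - (2*pC*qC*stC + kcC) * hpq2C
    have hνν : (starRingEnd ℂ) ν * ν = kcC^2 := by
      have hconjν : (starRingEnd ℂ) ν
          = pC*qC*((starRingEnd ℂ) lam)*(1 - (starRingEnd ℂ) ω) := by
        rw [hνdef]
        simp only [_root_.map_mul, map_sub, _root_.map_one, hconjpC, hconjqC]
      rw [hconjν, hνdef]
      linear_combination ((pC*qC)^2*(1-(starRingEnd ℂ) ω)*(1-ω)) * hlam1 + pC^2*qC^2 * hωprod
        - pC^2*qC^2 * hωsum + (2*pC*qC*stC + kcC) * hpq2C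
    have hν0 : ν ≠ 0 := by
      intro h0
      have h9 := hνν
      rw [h0, mul_zero] at h9
      exact pow_ne_zero 2 hkcC0 h9.symm
    set β : ℂ := -((starRingEnd ℂ) (c * μb / ν)) with hβdef
    have hconjβ : (starRingEnd ℂ) β = -(c * μb / ν) := by
      rw [hβdef, map_neg, Complex.conj_conj]
    have hββ : (starRingEnd ℂ) β * β = 1 - kcC^2 := by
      rw [hconjβ, hβdef,
        show -(c*μb/ν) * -((starRingEnd ℂ) (c*μb/ν)) = (c*μb/ν) * ((starRingEnd ℂ) (c*μb/ν)) by
          ring,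
        map_div₀, _root_.map_mul, div_mul_div_comm,
        show c*μb*((starRingEnd ℂ) c * (starRingEnd ℂ) μb)
          = ((starRingEnd ℂ) c * c) * ((starRingEnd ℂ) μb * μb) by ring,
        hcc, hμbμb,
        show ν * (starRingEnd ℂ) ν = (starRingEnd ℂ) ν * ν by ring, hνν,
        mul_comm (kcC^2), mul_div_assoc, div_self (pow_ne_zero 2 hkcC0), mul_one]
    set φv : Fin d → ℂ := U ^ n1 *ᵥ ψ with hφvdef
    have hφv : φv = (rt2 * lam^n1) • u + (rt2 * mu^n1) • v := by
      rw [hφvdef, hψdef, Matrix.mulVec_add, Matrix.mulVec_smul, Matrix.mulVec_smul,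
        hUpow n1 lam u huEig, hUpow n1 mu v hvEig, smul_smul, smul_smul]
    have hmupow : ((starRingEnd ℂ) mu)^n1 * mu^n1 = 1 := by
      rw [← mul_pow, hmu1, one_pow]
    have hconjrt2 : (starRingEnd ℂ) rt2 = rt2 := by rw [hrt2def]; exact Complex.conj_ofReal _
    have hψφ : star ψ ⬝ᵥ φv = c := by
      rw [hψdef, hφv, hcombo]
      simp only [_root_.map_mul, map_pow, hconjrt2]
      rw [hcdef]
      linear_combination (lam^n1 + mu^n1) * hrt2sq
    have hφφ : star φv ⬝ᵥ φv = 1 := by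
      rw [hφv, hcombo]
      simp only [_root_.map_mul, map_pow, hconjrt2]
      linear_combination (((starRingEnd ℂ) lam)^n1*lam^n1 + ((starRingEnd ℂ) mu)^n1*mu^n1) * hrt2sq
        + (1/2 : ℂ) * hlampow + (1/2 : ℂ) * hmupow
    have hgram : ∀ (x y : Fin d → ℂ), star x ⬝ᵥ x = 1 → star y ⬝ᵥ y = 1 → star x ⬝ᵥ y = c →
        star x ⬝ᵥ (TC⁻¹ • (y - c • x)) = 0 ∧
        star (TC⁻¹ • (y - c • x)) ⬝ᵥ (TC⁻¹ • (y - c • x)) = 1 := by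
      intro x y hxx hyy hxy
      have hyx : star y ⬝ᵥ x = (starRingEnd ℂ) c := by rw [dot_conj_comm, hxy]
      have hconjTCinv : (starRingEnd ℂ) (TC⁻¹) = TC⁻¹ := by
        rw [map_inv₀, hTCdef, Complex.conj_ofReal]
      have hin : star (y - c • x) ⬝ᵥ (y - c • x) = 1 - (starRingEnd ℂ) c * c := by
        rw [star_sub, star_smul, sub_dotProduct, dotProduct_sub,
          dotProduct_sub, smul_dotProduct, smul_dotProduct,
          dotProduct_smul, dotProduct_smul, hxx, hyy, hxy, hyx]
        simp only [smul_eq_mul, RCLike.star_def]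
        ring
      constructor
      · rw [dotProduct_smul, dotProduct_sub, dotProduct_smul, hxy, hxx,
          smul_eq_mul, smul_eq_mul, mul_one, sub_self, mul_zero]
      · rw [star_smul, smul_dotProduct, dotProduct_smul, hin, hcc]
        simp only [smul_eq_mul, RCLike.star_def]
        rw [hconjTCinv, ← hTCsq]
        field_simp
    obtain ⟨hψφ00, hφ2φ2⟩ := hgram ψ φv hψψ hφφ hψφ
    set φ2v : Fin d → ℂ := TC⁻¹ • (φv - c • ψ) with hφ2def
    set a1 : ℂ := (starRingEnd ℂ) c * pC + β * qC with ha1def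
    set a2 : ℂ := (starRingEnd ℂ) c * qC - β * pC with ha2def
    set av : Fin d → ℂ := a1 • u + a2 • v with havdef
    set bb : Fin d → ℂ := pC • u + qC • v with hbbdef
    have hconja1 : (starRingEnd ℂ) a1 = c * pC + (starRingEnd ℂ) β * qC := by
      rw [ha1def]; simp only [map_add, _root_.map_mul, Complex.conj_conj, hconjpC, hconjqC]
    have hconja2 : (starRingEnd ℂ) a2 = c * qC - (starRingEnd ℂ) β * pC := by
      rw [ha2def]; simp only [map_sub, _root_.map_mul, Complex.conj_conj, hconjpC, hconjqC]
    have haa : star av ⬝ᵥ av = 1 := by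
      rw [havdef, hcombo, hconja1, hconja2, ha1def, ha2def]
      linear_combination (pC^2+qC^2) * hcc + (pC^2+qC^2) * hββ + hpq1C
    have hab : star av ⬝ᵥ bb = c := by
      rw [havdef, hbbdef, hcombo, hconja1, hconja2]
      linear_combination c * hpq1C
    have hbb1 : star bb ⬝ᵥ bb = 1 := by
      rw [hbbdef, hcombo, hconjpC, hconjqC]
      linear_combination hpq1C
    obtain ⟨hab0, hb2b2⟩ := hgram av bb haa hbb1 hab
    set b2v : Fin d → ℂ := TC⁻¹ • (bb - c • av) with hb2def
    obtain ⟨X, hXU, hXψ, hXφ2⟩ :=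
      exists_unitary_two hd ψ φ2v av b2v hψψ hφ2φ2 hψφ00 haa hb2b2 hab0
    refine ⟨X, hXU, ψ, hψψ, ?_⟩
    have hTCmul : ∀ w : Fin d → ℂ, TC • (TC⁻¹ • w) = w := by
      intro w; rw [smul_smul, mul_inv_cancel₀ hTCne, one_smul]
    have hφvexp : φv = TC • φ2v + c • ψ := by
      rw [hφ2def, hTCmul, sub_add_cancel]
    have hlin : ∀ (M : Matrix (Fin d) (Fin d) ℂ) (t z : ℂ) (x y : Fin d → ℂ),
        M *ᵥ (t • x + z • y) = t • (M *ᵥ x) + z • (M *ᵥ y) := by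
      intros M t z x y
      rw [Matrix.mulVec_add, Matrix.mulVec_smul, Matrix.mulVec_smul]
    have hXφv : X *ᵥ φv = bb := by
      rw [hφvexp, hlin, hXψ, hXφ2, hb2def, hTCmul, sub_add_cancel]
    have hsplit : (Xᴴ * U * X * U ^ n1) *ᵥ ψ = Xᴴ *ᵥ (U *ᵥ (X *ᵥ φv)) := by
      rw [hφvdef]
      simp only [Matrix.mulVec_mulVec, Matrix.mul_assoc]
    rw [hsplit, hXφv]
    rw [Matrix.dotProduct_mulVec, ← Matrix.star_mulVec, hXψ]
    have hUbb : U *ᵥ bb = (pC*lam) • u + (qC*mu) • v := by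
      rw [hbbdef, Matrix.mulVec_add, Matrix.mulVec_smul, Matrix.mulVec_smul, huEig, hvEig,
        smul_smul, smul_smul]
    have hstep : star av ⬝ᵥ (U *ᵥ bb) = c * μb + (starRingEnd ℂ) β * ν := by
      rw [hUbb, havdef, hcombo, hconja1, hconja2, hμbdef, hνdef, hmudef]
      ring
    rw [hstep, hconjβ, neg_mul, div_mul_cancel₀ _ hν0, add_neg_cancel]
end

section
/- Let U be a unitary operator on ℂ^d and suppose there exists a unit vector ψ with ⟨ψ|U|ψ⟩ = 0. Then Θ(U) ≥ π, i.e., the eigenvalues of U are not all contained in an open arc of length less than π. -/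
/-
If the spectrum of `U` lay in a closed arc of length `L < π`, multiplying `U` by the unit scalar
that rotates the midpoint of the arc to `1` would put the spectrum in the open right half-plane.
For a normal matrix this makes the real part `ℜ U` positive definite, so
`Re ⟨ψ, U ψ⟩ = ⟨ψ, (ℜ U) ψ⟩ > 0` for every `ψ ≠ 0`, contradicting `⟨ψ, U ψ⟩ = 0`.
-/

open Complex Matrix

-- The L2 operator norm only supplies the C⋆-algebra structure (hence the continuous functional
-- calculus); spectra do not depend on it.
open scoped Matrix.Norms.L2Operator MatrixOrder ComplexOrder ComplexStarModule

namespace Matrix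

variable {n : Type*} [Fintype n] [DecidableEq n]

theorem posDef_realPart_of_forall_re_pos (U : Matrix n n ℂ) [IsStarNormal U]
    (h : ∀ z ∈ spectrum ℂ U, 0 < z.re) : (ℜ U : Matrix n n ℂ).PosDef := by
  rw [← isStrictlyPositive_iff_posDef,
    StarOrderedRing.isStrictlyPositive_iff_spectrum_pos (R := ℝ) _ (ℜ U).2, spectrum_realPart' U]
  rintro _ ⟨z, hz, rfl⟩
  exact h z hz

theorem dotProduct_realPart_mulVec (U : Matrix n n ℂ) (ψ : n → ℂ) :
    star ψ ⬝ᵥ ((ℜ U : Matrix n n ℂ) *ᵥ ψ) = (star ψ ⬝ᵥ (U *ᵥ ψ)).re := by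
  have h : star ψ ⬝ᵥ (star U *ᵥ ψ) = star (star ψ ⬝ᵥ (U *ᵥ ψ)) := by
    rw [dotProduct_mulVec, star_eq_conjTranspose, ← star_mulVec, star_dotProduct]
  rw [realPart_apply_coe, smul_mulVec, add_mulVec, dotProduct_smul, dotProduct_add, h,
    re_eq_add_conj]
  simp only [RCLike.star_def, ← Complex.coe_smul]
  push_cast
  ring

theorem re_dotProduct_mulVec_pos_of_forall_re_pos (U : Matrix n n ℂ) [IsStarNormal U]
    (h : ∀ z ∈ spectrum ℂ U, 0 < z.re) {ψ : n → ℂ} (hψ : ψ ≠ 0) :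
    0 < (star ψ ⬝ᵥ (U *ᵥ ψ)).re := by
  simpa [dotProduct_realPart_mulVec] using
    (posDef_realPart_of_forall_re_pos U h).re_dotProduct_pos hψ

end Matrix

theorem Complex.re_exp_mul_exp_pos_of_mem_Icc {a L t : ℝ} (hL : L < Real.pi)
    (ht : t ∈ Set.Icc a (a + L)) :
    0 < (exp (-(I * (a + L / 2))) * exp (I * t)).re := by
  rw [← Complex.exp_add, show -(I * (a + L / 2)) + I * t = ((t - (a + L / 2) : ℝ) : ℂ) * I by
    push_cast; ring, exp_ofReal_mul_I_re]
  exact Real.cos_pos_of_mem_Ioo ⟨by linarith [ht.1], by linarith [ht.2]⟩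

theorem spectrum_exp_smul_re_pos_of_arc {A : Type*} [Ring A] [Algebra ℂ A] {U : A} {a L : ℝ}
    (hL : L < Real.pi) (hU : ∀ z ∈ spectrum ℂ U, ∃ t ∈ Set.Icc a (a + L), z = exp (I * t)) :
    ∀ z ∈ spectrum ℂ (exp (-(I * (a + L / 2))) • U), 0 < z.re := by
  rw [← Units.val_mk0 (exp_ne_zero _), ← Units.smul_def, spectrum.unit_smul_eq_smul]
  rintro _ ⟨z, hz, rfl⟩
  obtain ⟨t, ht, rfl⟩ := hU z hz
  exact re_exp_mul_exp_pos_of_mem_Icc hL ht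

theorem le_arcTheta {d : ℕ} {U : Matrix (Fin d) (Fin d) ℂ} (hU : U ∈ unitaryGroup (Fin d) ℂ)
    {r : ℝ} (h : ∀ L a : ℝ, (∀ z ∈ spectrum ℂ U, ∃ t ∈ Set.Icc a (a + L), z = exp (I * t)) →
      r ≤ L) :
    r ≤ arcTheta U := by
  refine le_csInf ⟨2 * Real.pi, by positivity, -Real.pi, fun z hz => ⟨z.arg, ?_, ?_⟩⟩
    fun L ⟨_, a, ha⟩ => h L a ha
  · have := arg_mem_Ioc z
    constructor <;> linarith [this.1, this.2]
  · conv_lhs => rw [← norm_mul_exp_arg_mul_I z, spectrum.norm_eq_one_of_unitary hU hz]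
    rw [ofReal_one, one_mul, mul_comm]

theorem pi_le_theta_of_orthogonal {d : ℕ}
    (U : Matrix (Fin d) (Fin d) ℂ) (hU : U ∈ Matrix.unitaryGroup (Fin d) ℂ)
    (ψ : Fin d → ℂ) (hψ : star ψ ⬝ᵥ ψ = 1) (horth : star ψ ⬝ᵥ (U *ᵥ ψ) = 0) :
    Real.pi ≤ arcTheta U := by
  have hψ0 : ψ ≠ 0 := by
    rintro rfl
    simp at hψ
  refine le_arcTheta hU fun L a ha => ?_
  by_contra! hL
  have : IsStarNormal U := isStarNormal_of_mem_unitary hU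
  have hpos := re_dotProduct_mulVec_pos_of_forall_re_pos _
    (spectrum_exp_smul_re_pos_of_arc hL ha) hψ0
  simp [smul_mulVec, horth] at hpos
end
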